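/- Fix M ≥ 1, labels y ∈ {0,1}^M, and a positional-invariant performance measure μ, and let E_j(y) := (1/C(M,j)) Σ_{ŷ∈Y_j} μ(ŷ, y). For a probability mass function h on {0,1}^M, equality Perf_{μ,y}(h) = min_{j∈{0,…,M}} E_j(y) holds if and only if h places all probability mass on minimizing groups, i.e., Σ_{j ∈ argmin_{j'} E_{j'}(y)} P_h(Y_j) = 1, where P_h(Y_j) := Σ_{ŷ∈Y_j} h(ŷ). -/

import Mathlib

/-- `Yset M j`: binary vectors of length `M` (functions `Fin M → Bool`) with exactly `j` ones. -/
def Yset (M j : ℕ) : Finset (Fin M → Bool) :=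
  Finset.univ.filter (fun v => (Finset.univ.filter (fun i => v i = true)).card = j)

/-- A performance measure is positional-invariant if permuting predictions and labels
simultaneously leaves it unchanged. -/
def PosInvariant (M : ℕ) (μ : (Fin M → Bool) → (Fin M → Bool) → ℝ) : Prop :=
  ∀ (π : Equiv.Perm (Fin M)) (yhat y : Fin M → Bool), μ (yhat ∘ ⇑π) (y ∘ ⇑π) = μ yhat y

/-- Group average `E_j(y)`: the mean of `μ(yhat, y)` over `yhat ∈ Y_j`. -/
noncomputable def Egroup (M : ℕ) (μ : (Fin M → Bool) → (Fin M → Bool) → ℝ)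
    (y : Fin M → Bool) (j : ℕ) : ℝ :=
  (1 / (M.choose j : ℝ)) * ∑ yhat ∈ Yset M j, μ yhat y

/-- Permuted expected performance of an input-independent classifier with pmf `h`. -/
noncomputable def Perf (M : ℕ) (μ : (Fin M → Bool) → (Fin M → Bool) → ℝ)
    (y : Fin M → Bool) (h : (Fin M → Bool) → ℝ) : ℝ :=
  (1 / (M.factorial : ℝ)) *
    ∑ π : Equiv.Perm (Fin M), ∑ yhat : Fin M → Bool, h yhat * μ yhat (y ∘ ⇑π)

/-- Dutch Draw classifier `DD_j`: the uniform distribution on `Y_j`. -/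
noncomputable def DD (M j : ℕ) : (Fin M → Bool) → ℝ :=
  fun yhat => if yhat ∈ Yset M j then 1 / (M.choose j : ℝ) else 0

/-- Number of ones in a binary vector. -/
def cnt (M : ℕ) (v : Fin M → Bool) : ℕ := (Finset.univ.filter (fun i => v i = true)).card

lemma mem_Yset {M j : ℕ} (v : Fin M → Bool) : v ∈ Yset M j ↔ cnt M v = j := by
  simp [Yset, cnt]

lemma cnt_le {M : ℕ} (v : Fin M → Bool) : cnt M v ≤ M := by
  simpa [cnt] using (Finset.card_filter_le Finset.univ (fun i => v i = true))

lemma cnt_comp_perm {M : ℕ} (v : Fin M → Bool) (π : Equiv.Perm (Fin M)) :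
    cnt M (v ∘ ⇑π) = cnt M v := by
  unfold cnt
  apply Finset.card_nbij' (fun i => π i) (fun i => π.symm i) <;>
    simp [Set.MapsTo, Set.LeftInvOn, Set.RightInvOn]

lemma exists_perm_comp {M : ℕ} (v w : Fin M → Bool) (hc : cnt M v = cnt M w) :
    ∃ σ : Equiv.Perm (Fin M), v ∘ ⇑σ = w := by
  have h1 : Fintype.card {i // w i = true} = Fintype.card {i // v i = true} := by
    simp only [Fintype.card_subtype]
    exact hc.symm
  have h2 : Fintype.card {i // ¬ w i = true} = Fintype.card {i // ¬ v i = true} := by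
    rw [Fintype.card_subtype_compl, Fintype.card_subtype_compl, h1]
  let et := Fintype.equivOfCardEq h1
  let ef := Fintype.equivOfCardEq h2
  refine ⟨(Equiv.sumCompl (fun i => w i = true)).symm.trans
    ((et.sumCongr ef).trans (Equiv.sumCompl (fun i => v i = true))), ?_⟩
  funext i
  by_cases hw : w i = true
  · have e1 := Equiv.sumCompl_symm_apply_of_pos (p := fun i => w i = true) hw
    rw [Function.comp_apply, Equiv.trans_apply, e1]
    simp [hw, (et ⟨i, hw⟩).2]
  · have e1 := Equiv.sumCompl_symm_apply_of_neg (p := fun i => w i = true) hw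
    rw [Function.comp_apply, Equiv.trans_apply, e1]
    have hv := (ef ⟨i, hw⟩).2
    simp only [Bool.not_eq_true] at hv hw ⊢
    simp [hv, hw]

lemma card_Yset {M j : ℕ} : (Yset M j).card = M.choose j := by
  have : (Yset M j).card = (Finset.powersetCard j (Finset.univ : Finset (Fin M))).card := by
    apply Finset.card_nbij (fun v => Finset.univ.filter (fun i => v i = true))
    · intro v hv
      simp only [Finset.mem_coe, mem_Yset, cnt] at hv
      simp [Finset.mem_powersetCard, hv]
    · intro v hv w hw hvw
      funext i
      simp only [Finset.ext_iff, Finset.mem_filter, Finset.mem_univ, true_and] at hvw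
      have := hvw i
      cases hb : v i <;> cases hb' : w i <;> simp_all
    · intro s hs
      simp only [Finset.mem_coe, Finset.mem_powersetCard] at hs
      refine ⟨fun i => decide (i ∈ s), ?_, ?_⟩
      · simp only [Finset.mem_coe, mem_Yset, cnt, decide_eq_true_eq]
        rw [← hs.2]
        congr 1
        ext i
        simp
      · ext i
        simp
  rw [this, Finset.card_powersetCard, Finset.card_fin]

section key
variable {M : ℕ} {μ : (Fin M → Bool) → (Fin M → Bool) → ℝ}

lemma image_comp_eq (yhat : Fin M → Bool) :
    Finset.image (fun π : Equiv.Perm (Fin M) => yhat ∘ ⇑π) Finset.univ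
      = Yset M (cnt M yhat) := by
  ext v
  simp only [Finset.mem_image, Finset.mem_univ, true_and, mem_Yset]
  constructor
  · rintro ⟨π, rfl⟩; exact cnt_comp_perm yhat π
  · intro hv; exact exists_perm_comp yhat v hv.symm

lemma fiber_card_const (yhat v : Fin M → Bool) (hv : v ∈ Yset M (cnt M yhat)) :
    (Finset.univ.filter (fun π : Equiv.Perm (Fin M) => yhat ∘ ⇑π = v)).card
      = (Finset.univ.filter (fun π : Equiv.Perm (Fin M) => yhat ∘ ⇑π = yhat)).card := by
  obtain ⟨π₀, hπ₀⟩ := exists_perm_comp yhat v ((mem_Yset v).mp hv).symm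
  apply Finset.card_nbij' (fun π => π₀.symm.trans π) (fun ρ => π₀.trans ρ)
  · intro π hπ
    simp only [Finset.mem_coe, Finset.mem_filter, Finset.mem_univ, true_and] at hπ ⊢
    funext x
    have h1 : yhat (π (π₀.symm x)) = v (π₀.symm x) := congrFun hπ (π₀.symm x)
    have h2 : v (π₀.symm x) = yhat (π₀ (π₀.symm x)) := (congrFun hπ₀ (π₀.symm x)).symm
    simpa using h1.trans (by simpa using h2)
  · intro ρ hρ
    simp only [Finset.mem_coe, Finset.mem_filter, Finset.mem_univ, true_and] at hρ ⊢
    funext x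
    have h1 : yhat (ρ (π₀ x)) = yhat (π₀ x) := congrFun hρ (π₀ x)
    simpa using h1.trans (congrFun hπ₀ x)
  · intro π _; ext x; simp
  · intro ρ _; ext x; simp

lemma fact_eq_stab_mul_choose (yhat : Fin M → Bool) :
    M.factorial = (Finset.univ.filter (fun π : Equiv.Perm (Fin M) => yhat ∘ ⇑π = yhat)).card
      * M.choose (cnt M yhat) := by
  have h1 : (Finset.univ : Finset (Equiv.Perm (Fin M))).card
      = ∑ v ∈ Yset M (cnt M yhat),
        (Finset.univ.filter (fun π : Equiv.Perm (Fin M) => yhat ∘ ⇑π = v)).card := by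
    apply Finset.card_eq_sum_card_fiberwise
    intro π _
    rw [Finset.mem_coe, mem_Yset]
    exact cnt_comp_perm yhat π
  rw [Finset.card_univ, Fintype.card_perm, Fintype.card_fin] at h1
  rw [h1, Finset.sum_congr rfl (fun v hv => fiber_card_const yhat v hv),
    Finset.sum_const, card_Yset, smul_eq_mul, mul_comm]

lemma avg_perm_eq (hμ : PosInvariant M μ) (y yhat : Fin M → Bool) :
    (1 / (M.factorial : ℝ)) * ∑ π : Equiv.Perm (Fin M), μ yhat (y ∘ ⇑π)
      = Egroup M μ y (cnt M yhat) := by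
  have step1 : ∀ π : Equiv.Perm (Fin M), μ yhat (y ∘ ⇑π) = μ (yhat ∘ ⇑π⁻¹) y := by
    intro π
    have := hμ π (yhat ∘ ⇑π⁻¹) y
    rw [← this]
    congr 1
    funext x
    simp
  have step2 : ∑ π : Equiv.Perm (Fin M), μ yhat (y ∘ ⇑π)
      = ∑ π : Equiv.Perm (Fin M), μ (yhat ∘ ⇑π) y := by
    rw [Finset.sum_congr rfl (fun π _ => step1 π)]
    exact Finset.sum_equiv (Equiv.inv _) (by simp) (by simp)
  have step3 : ∑ π : Equiv.Perm (Fin M), μ (yhat ∘ ⇑π) y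
      = ((Finset.univ.filter (fun π : Equiv.Perm (Fin M) => yhat ∘ ⇑π = yhat)).card : ℝ)
        * ∑ v ∈ Yset M (cnt M yhat), μ v y := by
    rw [Finset.sum_comp (fun v => μ v y) (fun π : Equiv.Perm (Fin M) => yhat ∘ ⇑π),
      image_comp_eq]
    rw [Finset.sum_congr rfl (fun v hv => by rw [fiber_card_const yhat v hv])]
    rw [← Finset.smul_sum, nsmul_eq_mul]
  rw [step2, step3, Egroup]
  have hfact := fact_eq_stab_mul_choose yhat
  have hch : 0 < M.choose (cnt M yhat) := Nat.choose_pos (cnt_le yhat)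
  have hf : (0:ℝ) < (M.factorial : ℝ) := by exact_mod_cast Nat.factorial_pos M
  have hcast : (M.factorial : ℝ)
      = ((Finset.univ.filter (fun π : Equiv.Perm (Fin M) => yhat ∘ ⇑π = yhat)).card : ℝ)
        * (M.choose (cnt M yhat) : ℝ) := by exact_mod_cast hfact
  field_simp
  rw [hcast]
  ring

end key

/-- Equality with the minimal group average holds iff all probability mass lies on minimizing
groups. -/
theorem perf_eq_min_iff (M : ℕ) (hM : 1 ≤ M)
    (μ : (Fin M → Bool) → (Fin M → Bool) → ℝ) (y : Fin M → Bool)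
    (hμ : PosInvariant M μ)
    (h : (Fin M → Bool) → ℝ)
    (hpos : ∀ v, 0 ≤ h v) (hsum : ∑ v : Fin M → Bool, h v = 1) :
    Perf M μ y h = (Finset.range (M + 1)).inf' Finset.nonempty_range_add_one (Egroup M μ y)
      ↔ ∑ j ∈ (Finset.range (M + 1)).filter
            (fun j => Egroup M μ y j
              = (Finset.range (M + 1)).inf' Finset.nonempty_range_add_one (Egroup M μ y)),
          (∑ yhat ∈ Yset M j, h yhat) = 1 := by
  set m := (Finset.range (M + 1)).inf' Finset.nonempty_range_add_one (Egroup M μ y) with hm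
  set E := Egroup M μ y with hE
  set P : ℕ → ℝ := fun j => ∑ yhat ∈ Yset M j, h yhat with hPdef
  have hYset : ∀ j, Yset M j = Finset.univ.filter (fun v => cnt M v = j) := fun j => rfl
  have hmaps : ∀ v ∈ (Finset.univ : Finset (Fin M → Bool)), cnt M v ∈ Finset.range (M + 1) :=
    fun v _ => Finset.mem_range.mpr (Nat.lt_succ_of_le (cnt_le v))
  -- Perf as weighted sum
  have hPerf : Perf M μ y h = ∑ j ∈ Finset.range (M + 1), P j * E j := by
    have h1 : Perf M μ y h = ∑ v : Fin M → Bool, h v * E (cnt M v) := by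
      rw [Perf, Finset.sum_comm, Finset.mul_sum]
      refine Finset.sum_congr rfl (fun v _ => ?_)
      rw [hE, ← avg_perm_eq hμ y v]
      simp only [Finset.mul_sum]
      refine Finset.sum_congr rfl (fun π _ => ?_)
      ring
    rw [h1, ← Finset.sum_fiberwise_of_maps_to hmaps (fun v => h v * E (cnt M v))]
    refine Finset.sum_congr rfl (fun j hj => ?_)
    rw [hPdef]
    simp only
    rw [hYset j, Finset.sum_mul]
    refine Finset.sum_congr rfl (fun v hv => ?_)
    rw [(Finset.mem_filter.mp hv).2]
  have hPsum : ∑ j ∈ Finset.range (M + 1), P j = 1 := by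
    rw [hPdef]
    simp only
    rw [← hsum, ← Finset.sum_fiberwise_of_maps_to hmaps h]
    exact Finset.sum_congr rfl (fun j _ => by rw [hYset j])
  have hPnn : ∀ j, 0 ≤ P j := fun j => Finset.sum_nonneg (fun v _ => hpos v)
  have hEm : ∀ j ∈ Finset.range (M + 1), m ≤ E j := fun j hj => Finset.inf'_le _ hj
  have key : Perf M μ y h - m = ∑ j ∈ Finset.range (M + 1), P j * (E j - m) := by
    rw [hPerf]
    have : ∑ j ∈ Finset.range (M + 1), P j * (E j - m)
        = ∑ j ∈ Finset.range (M + 1), P j * E j - (∑ j ∈ Finset.range (M + 1), P j) * m := by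
      rw [Finset.sum_mul, ← Finset.sum_sub_distrib]
      exact Finset.sum_congr rfl (fun j _ => by ring)
    rw [this, hPsum, one_mul]
  have hterm : ∀ j ∈ Finset.range (M + 1), 0 ≤ P j * (E j - m) :=
    fun j hj => mul_nonneg (hPnn j) (sub_nonneg.mpr (hEm j hj))
  have lhs_iff : Perf M μ y h = m ↔ ∀ j ∈ Finset.range (M + 1), P j * (E j - m) = 0 := by
    rw [← sub_eq_zero, key]
    exact Finset.sum_eq_zero_iff_of_nonneg hterm
  have split := Finset.sum_filter_add_sum_filter_not (Finset.range (M + 1))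
    (fun j => E j = m) P
  have rhs_iff : (∑ j ∈ (Finset.range (M + 1)).filter (fun j => E j = m), P j = 1)
      ↔ ∀ j ∈ (Finset.range (M + 1)).filter (fun j => ¬ E j = m), P j = 0 := by
    rw [← Finset.sum_eq_zero_iff_of_nonneg (fun j _ => hPnn j)]
    constructor
    · intro h1
      have := split
      rw [h1, hPsum] at this
      linarith
    · intro h1
      rw [h1, add_zero] at split
      rw [split, hPsum]
  rw [lhs_iff, rhs_iff]
  constructor
  · intro h1 j hj
    rw [Finset.mem_filter] at hj
    have := h1 j hj.1
    rcases mul_eq_zero.mp this with h2 | h2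
    · exact h2
    · exact absurd (by linarith [sub_eq_zero.mp h2]) hj.2
  · intro h1 j hj
    by_cases hEj : E j = m
    · rw [hEj, sub_self, mul_zero]
    · rw [h1 j (Finset.mem_filter.mpr ⟨hj, hEj⟩), zero_mul]
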